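/- Let U and V be Hermitian complex n×n matrices and T an arbitrary complex n×n matrix. Then |Tr[T U T* V]| ≤ Tr[T*T |U|] · σ₁(V), where σ₁(V) denotes the largest singular value of V. Symmetrically, |Tr[T U T* V]| ≤ σ₁(U) · Tr[T T* |V|]. -/

import Mathlib

open Matrix MeasureTheory
open scoped ComplexOrder ENNReal RealInnerProductSpace

/-- The modulus `|A| = (Aᴴ A)^(1/2)` of a complex matrix. -/
noncomputable def matAbs {n : ℕ} (A : Matrix (Fin n) (Fin n) ℂ) : Matrix (Fin n) (Fin n) ℂ :=
  ((Matrix.posSemidef_conjTranspose_mul_self A).1.eigenvectorUnitary : Matrix (Fin n) (Fin n) ℂ) *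
    Matrix.diagonal ((↑) ∘ (Real.sqrt ·) ∘ (Matrix.posSemidef_conjTranspose_mul_self A).1.eigenvalues) *
    (star ((Matrix.posSemidef_conjTranspose_mul_self A).1.eigenvectorUnitary : Matrix (Fin n) (Fin n) ℂ))

lemma matAbs_posSemidef {n : ℕ} (A : Matrix (Fin n) (Fin n) ℂ) : (matAbs A).PosSemidef :=
  Matrix.PosSemidef.mul_mul_conjTranspose_same
    (Matrix.posSemidef_diagonal_iff.mpr (by
      intro i
      simp only [Function.comp_apply]
      exact Complex.zero_le_real.mpr (Real.sqrt_nonneg _))) _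

/-- Singular values of a complex matrix: the eigenvalues of `|A|`. -/
noncomputable def singVals {n : ℕ} (A : Matrix (Fin n) (Fin n) ℂ) : Fin n → ℝ :=
  (matAbs_posSemidef A).1.eigenvalues

/-- Schatten `p`-norm for `p ∈ [1,∞]`: the `ℓᵖ` norm of the singular values. -/
noncomputable def schatten {n : ℕ} (p : ℝ≥0∞) (A : Matrix (Fin n) (Fin n) ℂ) : ℝ :=
  if p = ⊤ then ⨆ i, singVals A i
  else (∑ i, (singVals A i) ^ p.toReal) ^ (1 / p.toReal)

/-- Real power of a positive semidefinite matrix via its spectral decomposition. -/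
noncomputable def psdRpow {n : ℕ} {A : Matrix (Fin n) (Fin n) ℂ} (hA : A.PosSemidef) (r : ℝ) :
    Matrix (Fin n) (Fin n) ℂ :=
  (hA.1.eigenvectorUnitary : Matrix (Fin n) (Fin n) ℂ) *
    (Matrix.diagonal (fun i => ((hA.1.eigenvalues i ^ r : ℝ) : ℂ))) *
    (star (hA.1.eigenvectorUnitary : Matrix (Fin n) (Fin n) ℂ))

/-!
Write `U = U⁺ - U⁻` with `U⁺, U⁻ ≥ 0` and `U⁺ + U⁻ = |U|`. Then `T U± T*` are positive
semidefinite, and for `A ≥ 0` diagonalizing `V = Q diag(μ) Q*` gives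
`|Tr[A V]| = |∑ (Q* A Q)ᵢᵢ μᵢ| ≤ Tr[A] · maxᵢ |μᵢ|`, where `maxᵢ |μᵢ| = σ₁(V)` since
`|V|` has eigenvalues `|μᵢ|`. Summing the two halves gives
`|Tr[T U T* V]| ≤ Tr[T |U| T*] σ₁(V) = Tr[T*T |U|] σ₁(V)`. The second inequality is the first one
for `(T*, V, U)`, because `Tr[T U T* V] = Tr[T* V T U]`.
-/

open scoped MatrixOrder

lemma matAbs_eq_cfcAbs {n : ℕ} (A : Matrix (Fin n) (Fin n) ℂ) : matAbs A = CFC.abs A := by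
  have h0 : 0 ≤ Aᴴ * A :=
    Matrix.nonneg_iff_posSemidef.mpr (Matrix.posSemidef_conjTranspose_mul_self A)
  rw [CFC.abs, star_eq_conjTranspose, CFC.sqrt_eq_real_sqrt _ h0, cfcₙ_eq_cfc,
    (Matrix.posSemidef_conjTranspose_mul_self A).1.cfc_eq, Matrix.IsHermitian.cfc,
    Unitary.conjStarAlgAut_apply]
  rfl

lemma Matrix.IsHermitian.abs_eigenvalues_le_iSup_singVals {n : ℕ} {A : Matrix (Fin n) (Fin n) ℂ}
    (hA : A.IsHermitian) (j : Fin n) : |hA.eigenvalues j| ≤ ⨆ i, singVals A i := by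
  have hmem : |hA.eigenvalues j| ∈ spectrum ℝ (matAbs A) := by
    rw [matAbs_eq_cfcAbs, CFC.abs_eq_cfc_norm A hA]
    exact cfc_map_spectrum (‖·‖) A hA ▸ ⟨_, hA.eigenvalues_mem_spectrum_real j, rfl⟩
  obtain ⟨k, hk⟩ := (matAbs_posSemidef A).1.spectrum_real_eq_range_eigenvalues ▸ hmem
  exact hk ▸ le_ciSup (Set.finite_range _).bddAbove k

lemma Matrix.PosSemidef.norm_trace_mul_le {m 𝕜 : Type*} [Fintype m] [DecidableEq m] [RCLike 𝕜]
    {A V : Matrix m m 𝕜} (hA : A.PosSemidef) (hV : V.IsHermitian) {c : ℝ}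
    (hc : ∀ i, |hV.eigenvalues i| ≤ c) : ‖(A * V).trace‖ ≤ RCLike.re A.trace * c := by
  set Q : Matrix m m 𝕜 := (hV.eigenvectorUnitary : Matrix m m 𝕜)
  set B := star Q * A * Q
  have hB : B.PosSemidef := by
    simpa [B, star_eq_conjTranspose] using hA.conjTranspose_mul_mul_same Q
  have hBtr : B.trace = A.trace := by
    rw [Matrix.trace_mul_cycle, Matrix.mem_unitaryGroup_iff.mp hV.eigenvectorUnitary.2,
      Matrix.one_mul]
  have hAV : (A * V).trace = ∑ i, B i i * hV.eigenvalues i := by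
    conv_lhs => rw [hV.spectral_theorem, Unitary.conjStarAlgAut_apply, ← Matrix.mul_assoc,
      ← Matrix.mul_assoc, Matrix.trace_mul_cycle, ← Matrix.mul_assoc]
    simp [Matrix.trace, Matrix.mul_diagonal, B, Q]
  have hdiag : ∀ i, ‖B i i‖ = RCLike.re (B i i) := fun i => by
    simpa using congrArg RCLike.re (RCLike.norm_of_nonneg' (hB.diag_nonneg (i := i)))
  calc ‖(A * V).trace‖
      ≤ ∑ i, ‖B i i * hV.eigenvalues i‖ := hAV ▸ norm_sum_le _ _
    _ = ∑ i, RCLike.re (B i i) * |hV.eigenvalues i| := by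
        simp only [norm_mul, RCLike.norm_ofReal, hdiag]
    _ ≤ ∑ i, RCLike.re (B i i) * c := by
        gcongr with i
        exacts [hdiag i ▸ norm_nonneg _, hc i]
    _ = RCLike.re A.trace * c := by
        rw [← hBtr, ← Finset.sum_mul, Matrix.trace, map_sum]
        rfl

lemma norm_trace_mul_mul_conjTranspose_mul_le {n : ℕ} (T U V : Matrix (Fin n) (Fin n) ℂ)
    (hU : U.IsHermitian) (hV : V.IsHermitian) :
    ‖(T * U * Tᴴ * V).trace‖ ≤ ((Tᴴ * T * matAbs U).trace).re * ⨆ i, singVals V i := by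
  have hc := hV.abs_eigenvalues_le_iSup_singVals
  have hPos : (T * U⁺ * Tᴴ).PosSemidef :=
    (Matrix.nonneg_iff_posSemidef.mp (CFC.posPart_nonneg U)).mul_mul_conjTranspose_same T
  have hNeg : (T * U⁻ * Tᴴ).PosSemidef :=
    (Matrix.nonneg_iff_posSemidef.mp (CFC.negPart_nonneg U)).mul_mul_conjTranspose_same T
  have hsplit : T * U * Tᴴ * V = T * U⁺ * Tᴴ * V - T * U⁻ * Tᴴ * V := by
    rw [← Matrix.sub_mul, ← Matrix.sub_mul, ← Matrix.mul_sub, CFC.posPart_sub_negPart U hU]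
  have habs : (Tᴴ * T * matAbs U).trace = (T * U⁺ * Tᴴ).trace + (T * U⁻ * Tᴴ).trace := by
    rw [← Matrix.trace_add, ← Matrix.add_mul, ← Matrix.mul_add, CFC.posPart_add_negPart U hU,
      ← matAbs_eq_cfcAbs]
    exact (Matrix.trace_mul_cycle _ _ _).symm
  calc ‖(T * U * Tᴴ * V).trace‖
      ≤ ‖(T * U⁺ * Tᴴ * V).trace‖ + ‖(T * U⁻ * Tᴴ * V).trace‖ := by
        rw [hsplit, Matrix.trace_sub]
        exact norm_sub_le _ _
    _ ≤ (T * U⁺ * Tᴴ).trace.re * _ + (T * U⁻ * Tᴴ).trace.re * _ :=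
        add_le_add (hPos.norm_trace_mul_le hV hc) (hNeg.norm_trace_mul_le hV hc)
    _ = ((Tᴴ * T * matAbs U).trace).re * ⨆ i, singVals V i := by
        rw [habs, Complex.add_re, add_mul]

/-- endpoint trace inequalities
`|Tr[T U T* V]| ≤ Tr[T*T |U|] · σ₁(V)` and `|Tr[T U T* V]| ≤ σ₁(U) · Tr[T T* |V|]`
for Hermitian `U, V` and arbitrary `T`. -/
theorem trace_endpoint {n : ℕ} (U V T : Matrix (Fin n) (Fin n) ℂ)
    (hU : U.IsHermitian) (hV : V.IsHermitian) :
    ‖(T * U * Tᴴ * V).trace‖ ≤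
        ((Tᴴ * T * matAbs U).trace).re * (⨆ i, singVals V i) ∧
    ‖(T * U * Tᴴ * V).trace‖ ≤
        (⨆ i, singVals U i) * ((T * Tᴴ * matAbs V).trace).re := by
  refine ⟨norm_trace_mul_mul_conjTranspose_mul_le T U V hU hV, ?_⟩
  have hcycle : (T * U * Tᴴ * V).trace = (Tᴴ * V * T * U).trace := by
    rw [Matrix.mul_assoc (T * U), Matrix.trace_mul_comm, ← Matrix.mul_assoc]
  rw [hcycle, mul_comm]
  simpa only [Matrix.conjTranspose_conjTranspose] using
    norm_trace_mul_mul_conjTranspose_mul_le Tᴴ V U hV hU
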